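/- arXiv:2511.20535 — 2 statements merged into one kernel-verified Lean document; each statement's English description precedes it below -/
import Mathlib

section
/- Assume |c| = 1. Then K⁻ ⊆ {(x,y) ∈ Q : max(|x|, |y|) = 1}. -/
/-!
Write `aₙ` for the first coordinate of `gⁿ(z)`; its second coordinate is `aₙ₊₁`, and
`aₙ₊₁ aₙ₊₂ = aₙ - c`. As `|c| = 1`, the ultrametric inequality gives `|aₙ₊₁| |aₙ₊₂| = |aₙ|`
when `|aₙ| > 1` and `|aₙ₊₁| |aₙ₊₂| ≤ 1` otherwise. Norms above `1` are at least `p`, so the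
norms cannot stay above `1` forever (each step then divides `|aₙ|` by at least `p`); if some
`|aₙ| > 1` there is thus an `m` with `|aₘ| > 1 ≥ |aₘ₊₁|`. From there on
`|aₜ₊₂| ≥ |aₜ|²` along every second index, contradicting boundedness. Hence all `|aₙ| ≤ 1`,
and `|a₀|, |a₁| < 1` is impossible because then `1 = |a₀ - c| = |a₁| |a₂| < 1`.
-/

variable {p : ℕ}

/-- The unique `f`-preimage map `g(u,v) = (v, (u - c)/v)`. -/
noncomputable def g [Fact p.Prime] (c : ℚ_[p]) (z : ℚ_[p] × ℚ_[p]) : ℚ_[p] × ℚ_[p] :=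
  (z.2, (z.1 - c) / z.2)

/-- The set `Q` of points whose backward iterates are all defined. -/
def QSet [Fact p.Prime] (c : ℚ_[p]) : Set (ℚ_[p] × ℚ_[p]) :=
  {z | ∀ n : ℕ, ((g c)^[n] z).2 ≠ 0}

/-- `‖(x,y)‖ = max(|x|,|y|)`. -/
noncomputable def pnorm [Fact p.Prime] (z : ℚ_[p] × ℚ_[p]) : ℝ := max ‖z.1‖ ‖z.2‖

/-- The backward filled Julia set `K⁻`. -/
def KMinus [Fact p.Prime] (c : ℚ_[p]) : Set (ℚ_[p] × ℚ_[p]) :=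
  {z | z ∈ QSet c ∧ ∃ M : ℝ, ∀ n : ℕ, pnorm ((g c)^[n] z) ≤ M}

open Set

/-- The relations satisfied by the norms `rₙ = |aₙ|` of a backward orbit when `|c| = 1`. -/
structure NormRecurrence (r : ℕ → ℝ) : Prop where
  pos : ∀ n, 0 < r (n + 1)
  mul_eq_of_one_lt : ∀ n, 1 < r n → r (n + 1) * r (n + 2) = r n
  mul_le_one_of_le_one : ∀ n, r n ≤ 1 → r (n + 1) * r (n + 2) ≤ 1

namespace NormRecurrence

variable {r : ℕ → ℝ}

lemma sq_le_add_two (h : NormRecurrence r) {t : ℕ} (ht : 1 < r t) (htt : r t * r (t + 1) ≤ 1) :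
    r t ^ 2 ≤ r (t + 2) ∧ r (t + 2) * r (t + 3) ≤ 1 := by
  have hpos := h.pos t
  have hle : r (t + 1) ≤ 1 := by nlinarith
  refine ⟨le_of_mul_le_mul_left ?_ hpos, h.mul_le_one_of_le_one (t + 1) hle⟩
  rw [h.mul_eq_of_one_lt t ht]
  nlinarith

lemma pow_two_pow_le (h : NormRecurrence r) {t : ℕ} (ht : 1 < r t)
    (htt : r t * r (t + 1) ≤ 1) (j : ℕ) :
    r t ^ 2 ^ j ≤ r (t + 2 * j) ∧ r (t + 2 * j) * r (t + 2 * j + 1) ≤ 1 := by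
  induction j with
  | zero => simpa using htt
  | succ j ih =>
    have hgt : 1 < r (t + 2 * j) :=
      ht.trans_le ((le_self_pow₀ ht.le (by positivity)).trans ih.1)
    obtain ⟨hsq, hmul⟩ := h.sq_le_add_two hgt ih.2
    refine ⟨?_, hmul⟩
    calc r t ^ 2 ^ (j + 1) = (r t ^ 2 ^ j) ^ 2 := by rw [pow_succ, pow_mul]
      _ ≤ r (t + 2 * j) ^ 2 := pow_le_pow_left₀ (by positivity) ih.1 2
      _ ≤ r (t + 2 * (j + 1)) := hsq

lemma not_bddAbove (h : NormRecurrence r) {t : ℕ} (ht : 1 < r t) (htt : r t * r (t + 1) ≤ 1) :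
    ¬ BddAbove (range r) := by
  rintro ⟨M, hM⟩
  obtain ⟨n, hn⟩ := pow_unbounded_of_one_lt M ht
  have hpow : r t ^ n ≤ r t ^ 2 ^ n := pow_le_pow_right₀ ht.le n.lt_two_pow_self.le
  linarith [(h.pow_two_pow_le ht htt n).1, hM (mem_range_self (t + 2 * n))]

lemma exists_one_lt_and_le_one (h : NormRecurrence r) {q : ℝ} (hq : 1 < q)
    (hgap : ∀ n, 1 < r n → q ≤ r n) {N : ℕ} (hN : 1 < r N) :
    ∃ m, 1 < r m ∧ r (m + 1) ≤ 1 := by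
  by_contra! hstay
  have hall : ∀ k, 1 < r (N + k) := by
    intro k
    induction k with
    | zero => exact hN
    | succ k ih => exact hstay _ ih
  have hdesc : ∀ j, r (N + 2 * j) * q ^ j ≤ r N := by
    intro j
    induction j with
    | zero => simp
    | succ j ih =>
      have he := h.mul_eq_of_one_lt _ (hall (2 * j))
      have hq' : q ≤ r (N + 2 * j + 1) := hgap _ (hall (2 * j + 1))
      have hpos := h.pos (N + 2 * j + 1)
      calc r (N + 2 * (j + 1)) * q ^ (j + 1) = q * r (N + 2 * j + 2) * q ^ j := by ring_nf
        _ ≤ r (N + 2 * j + 1) * r (N + 2 * j + 2) * q ^ j := by gcongr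
        _ = r (N + 2 * j) * q ^ j := by rw [he]
        _ ≤ r N := ih
  obtain ⟨j, hj⟩ := pow_unbounded_of_one_lt (r N) hq
  nlinarith [hdesc j, hall (2 * j), pow_pos (zero_lt_one.trans hq) j]

lemma le_one_of_bddAbove (h : NormRecurrence r) {q : ℝ} (hq : 1 < q)
    (hgap : ∀ n, 1 < r n → q ≤ r n) (hbdd : BddAbove (range r)) (n : ℕ) : r n ≤ 1 := by
  by_contra! hn
  obtain ⟨m, hm, hm1⟩ := h.exists_one_lt_and_le_one hq hgap hn
  have hm2 : r m ≤ r (m + 2) := by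
    rw [← h.mul_eq_of_one_lt m hm]
    nlinarith [h.pos (m + 1)]
  exact h.not_bddAbove (hm.trans_le hm2) (h.mul_le_one_of_le_one (m + 1) hm1) hbdd

end NormRecurrence

section Ultrametric

variable {K : Type*}

lemma norm_sub_eq_max_of_norm_ne [SeminormedAddGroup K] [IsUltrametricDist K] {x c : K}
    (h : ‖x‖ ≠ ‖c‖) : ‖x - c‖ = max ‖x‖ ‖c‖ := by
  rw [sub_eq_add_neg, IsUltrametricDist.norm_add_eq_max_of_norm_ne_norm (by rwa [norm_neg]),
    norm_neg]

lemma norm_sub_le_one [SeminormedAddGroup K] [IsUltrametricDist K] {x c : K}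
    (hx : ‖x‖ ≤ 1) (hc : ‖c‖ ≤ 1) : ‖x - c‖ ≤ 1 := by
  rw [sub_eq_add_neg]
  exact (IsUltrametricDist.norm_add_le_max _ _).trans (max_le hx (by rwa [norm_neg]))

lemma max_norm_eq_one_of_mul_eq_sub [SeminormedRing K] [IsUltrametricDist K] {x y w c : K}
    (hc : ‖c‖ = 1) (hyw : y * w = x - c) (hx : ‖x‖ ≤ 1) (hy : ‖y‖ ≤ 1) (hw : ‖w‖ ≤ 1) :
    max ‖x‖ ‖y‖ = 1 := by
  by_contra hne
  have hlt : max ‖x‖ ‖y‖ < 1 := (max_le hx hy).lt_of_ne hne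
  have hxc : ‖x‖ < ‖c‖ := hc ▸ (le_max_left _ _).trans_lt hlt
  have : ‖x - c‖ < 1 :=
    calc ‖x - c‖ = ‖y * w‖ := by rw [hyw]
      _ ≤ ‖y‖ * ‖w‖ := norm_mul_le y w
      _ ≤ ‖y‖ := mul_le_of_le_one_right (norm_nonneg y) hw
      _ < 1 := (le_max_right _ _).trans_lt hlt
  rw [norm_sub_eq_max_of_norm_ne hxc.ne, max_eq_right hxc.le, hc] at this
  exact lt_irrefl 1 this

end Ultrametric

section Padic

variable [Fact p.Prime]

lemma Padic.natCast_le_norm_of_one_lt {x : ℚ_[p]} (h : 1 < ‖x‖) : (p : ℝ) ≤ ‖x‖ := by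
  by_contra! hlt
  have := (Padic.norm_le_pow_iff_norm_lt_pow_add_one x 0).2 (by simpa using hlt)
  simp only [zpow_zero] at this
  exact this.not_gt h

lemma g_iterate_succ_fst (c : ℚ_[p]) (z : ℚ_[p] × ℚ_[p]) (n : ℕ) :
    ((g c)^[n + 1] z).1 = ((g c)^[n] z).2 := by
  rw [Function.iterate_succ_apply']
  rfl

lemma g_fst_mul_g_snd (c : ℚ_[p]) {w : ℚ_[p] × ℚ_[p]} (hw : w.2 ≠ 0) :
    (g c w).1 * (g c w).2 = w.1 - c :=
  mul_div_cancel₀ _ hw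

lemma g_iterate_fst_mul_fst {c : ℚ_[p]} {z : ℚ_[p] × ℚ_[p]} (hz : z ∈ QSet c) (n : ℕ) :
    ((g c)^[n + 1] z).1 * ((g c)^[n + 2] z).1 = ((g c)^[n] z).1 - c := by
  rw [g_iterate_succ_fst, g_iterate_succ_fst, Function.iterate_succ_apply']
  exact g_fst_mul_g_snd c (hz n)

lemma normRecurrence_of_mem_QSet {c : ℚ_[p]} (hc : ‖c‖ = 1) {z : ℚ_[p] × ℚ_[p]}
    (hz : z ∈ QSet c) : NormRecurrence fun n ↦ ‖((g c)^[n] z).1‖ where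
  pos n := norm_pos_iff.2 (by rw [g_iterate_succ_fst]; exact hz n)
  mul_eq_of_one_lt n hn := by
    rw [← norm_mul, g_iterate_fst_mul_fst hz, norm_sub_eq_max_of_norm_ne (hc ▸ hn.ne'),
      max_eq_left (hc ▸ hn.le)]
  mul_le_one_of_le_one n hn := by
    rw [← norm_mul, g_iterate_fst_mul_fst hz]
    exact norm_sub_le_one hn hc.le

end Padic

theorem stmt4_general [Fact p.Prime] (c : ℚ_[p]) (hc : ‖c‖ = 1) :
    KMinus c ⊆ {z ∈ QSet c | max ‖z.1‖ ‖z.2‖ = 1} := by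
  rintro z ⟨hQ, M, hM⟩
  have hbdd : BddAbove (range fun n ↦ ‖((g c)^[n] z).1‖) :=
    ⟨M, forall_mem_range.2 fun n ↦ (le_max_left _ _).trans (hM n)⟩
  have hle := (normRecurrence_of_mem_QSet hc hQ).le_one_of_bddAbove
    (Nat.one_lt_cast.2 (Fact.out : p.Prime).one_lt) (fun _ ↦ Padic.natCast_le_norm_of_one_lt) hbdd
  exact ⟨hQ, max_norm_eq_one_of_mul_eq_sub hc (g_fst_mul_g_snd c (hQ 0)) (hle 0) (hle 1) (hle 2)⟩

/-- If `|c| = 1` then `K⁻ ⊆ {(x,y) ∈ Q : max(|x|,|y|) = 1}`. -/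
theorem stmt4 [Fact p.Prime] (hodd : Odd p) (c : ℚ_[p]) (hc : ‖c‖ = 1) :
    KMinus c ⊆ {z ∈ QSet c | max ‖z.1‖ ‖z.2‖ = 1} :=
  stmt4_general c hc
end

section
/- Assume |c| = 1. Then g(M₁) ⊆ H, and for every n ≥ 1, g(M_{2n+2}) ⊆ M_{2n+1} and g(M_{2n+1}) ⊆ M_{2n}. Consequently M := ⋃_{i≥1} M_i ⊆ Q \ K⁻. -/
variable {p : ℕ}

/-- The Fibonacci sequence with `F₀ = F₁ = 1`, extended by `F₋₁ = 0` and `F₋₂ = 1`. -/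
def FibZ (n : ℤ) : ℤ :=
  if 0 ≤ n then (Nat.fib (n.toNat + 1) : ℤ) else if n = -1 then 0 else if n = -2 then 1 else 0

/-- `M_{2n+1}`, for `n ≥ 0`. -/
def Modd [Fact p.Prime] (c : ℚ_[p]) (n : ℕ) : Set (ℚ_[p] × ℚ_[p]) :=
  {z ∈ QSet c | ‖z.2‖ ^ FibZ (2*(n:ℤ)-1) < ‖z.1‖ ^ FibZ (2*(n:ℤ)-2) ∧
    ‖z.1‖ ^ FibZ (2*(n:ℤ)-1) < ‖z.2‖ ^ FibZ (2*(n:ℤ)) ∧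
    ‖z.1‖ ^ FibZ (2*(n:ℤ)) ≤ ‖z.2‖ ^ FibZ (2*(n:ℤ)+1)}

/-- `M_{2n+2}`, for `n ≥ 0`. -/
def Meven [Fact p.Prime] (c : ℚ_[p]) (n : ℕ) : Set (ℚ_[p] × ℚ_[p]) :=
  {z ∈ QSet c | ‖z.1‖ ^ FibZ (2*(n:ℤ)-1) < ‖z.2‖ ^ FibZ (2*(n:ℤ)) ∧
    ‖z.2‖ ^ FibZ (2*(n:ℤ)+1) < ‖z.1‖ ^ FibZ (2*(n:ℤ)) ∧
    ‖z.2‖ ^ FibZ (2*(n:ℤ)+2) ≤ ‖z.1‖ ^ FibZ (2*(n:ℤ)+1)}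

/-!
Write `‖x‖ = p ^ a` and `‖y‖ = p ^ b`. As long as `‖x‖ > 1 = ‖c‖` we have `‖x - c‖ = ‖x‖`, so
`g` acts on the exponents linearly, `(a, b) ↦ (b, a - b)`, and the Fibonacci recurrence turns
the inequalities cutting out `M_{i+1}` into those cutting out `M_i`. Since the substitution is
invertible, the same recurrence carries `M_{i+1}` back to `M_1 = {0 < a ≤ b}`, which shows that
`a > 0`, i.e. `‖x‖ > 1`, on every `M_i`: this is what makes each step legitimate.
Two steps of `g` take `H` into `{‖x‖ > 1, ‖x‖ ‖y‖ ≤ 1}`, which `g ∘ g` preserves while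
squaring `‖x‖`, so orbits through `H` are unbounded.
-/

open Set Function

section Ultrametric

variable {S : Type*} [SeminormedAddCommGroup S] [IsUltrametricDist S] {x y : S}

lemma norm_sub_eq_left_of_norm_lt (h : ‖y‖ < ‖x‖) : ‖x - y‖ = ‖x‖ := by
  rw [sub_eq_add_neg, IsUltrametricDist.norm_add_eq_max_of_norm_ne_norm (by simpa using h.ne'),
    norm_neg, max_eq_left h.le]

lemma norm_sub_le_of_norm_le {r : ℝ} (hx : ‖x‖ ≤ r) (hy : ‖y‖ ≤ r) : ‖x - y‖ ≤ r := by
  rw [sub_eq_add_neg]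
  exact (IsUltrametricDist.norm_add_le_max _ _).trans (max_le hx (by rwa [norm_neg]))

end Ultrametric

lemma ne_zero_of_norm_zpow_lt {E : Type*} [NormedAddCommGroup E] {x y : E} {m n : ℤ}
    (hn : n ≠ 0) (h : ‖y‖ ^ m < ‖x‖ ^ n) : x ≠ 0 := by
  rintro rfl
  rw [norm_zero, zero_zpow n hn] at h
  exact (zpow_nonneg (norm_nonneg y) m).not_gt h

section Fibonacci

lemma FibZ_eq_fib {k j : ℤ} (hk : -2 ≤ k) (hj : j = k + 1) : FibZ k = Int.fib j := by
  subst hj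
  obtain hk | rfl | rfl : 0 ≤ k ∨ k = -1 ∨ k = -2 := by omega
  · rw [FibZ, if_pos hk, Int.fib_of_nonneg (by omega), show (k + 1).toNat = k.toNat + 1 by omega]
  · rfl
  · rfl

lemma FibZ_eq_add {i j l : ℤ} (hi : -2 ≤ i) (hj : j = i + 1) (hl : l = i + 2) :
    FibZ l = FibZ i + FibZ j := by
  subst hj hl
  rw [FibZ_eq_fib (by omega) rfl, FibZ_eq_fib hi rfl, FibZ_eq_fib (by omega) rfl]
  convert Int.fib_add_two (i + 1) using 2
  ring

lemma FibZ_ne_zero {k : ℤ} (hk : -2 ≤ k) (h : k ≠ -1) : FibZ k ≠ 0 := by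
  rw [FibZ_eq_fib hk rfl, Ne, Int.fib_eq_zero]
  omega

def OddCone (n : ℕ) (a b : ℤ) : Prop :=
  b * FibZ (2*(n:ℤ)-1) < a * FibZ (2*(n:ℤ)-2) ∧ a * FibZ (2*(n:ℤ)-1) < b * FibZ (2*(n:ℤ)) ∧
    a * FibZ (2*(n:ℤ)) ≤ b * FibZ (2*(n:ℤ)+1)

def EvenCone (n : ℕ) (a b : ℤ) : Prop :=
  a * FibZ (2*(n:ℤ)-1) < b * FibZ (2*(n:ℤ)) ∧ b * FibZ (2*(n:ℤ)+1) < a * FibZ (2*(n:ℤ)) ∧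
    b * FibZ (2*(n:ℤ)+2) ≤ a * FibZ (2*(n:ℤ)+1)

variable {a b : ℤ}

lemma evenCone_iff (n : ℕ) : EvenCone n a b ↔ OddCone n b (a - b) := by
  have r₂ : FibZ (2*n) = FibZ (2*n-2) + FibZ (2*n-1) :=
    FibZ_eq_add (by omega) (by omega) (by omega)
  have r₃ : FibZ (2*n+1) = FibZ (2*n-1) + FibZ (2*n) :=
    FibZ_eq_add (by omega) (by omega) (by omega)
  have r₄ : FibZ (2*n+2) = FibZ (2*n) + FibZ (2*n+1) :=
    FibZ_eq_add (by omega) (by omega) (by omega)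
  simp only [EvenCone, OddCone, r₄, r₃, r₂]
  constructor <;> rintro ⟨h₁, h₂, h₃⟩ <;> refine ⟨?_, ?_, ?_⟩ <;> linarith

lemma oddCone_succ_iff (n : ℕ) : OddCone (n + 1) a b ↔ EvenCone n b (a - b) := by
  have e₀ : FibZ (2*((n + 1 : ℕ) : ℤ)-2) = FibZ (2*n) := congrArg FibZ (by omega)
  have e₁ : FibZ (2*((n + 1 : ℕ) : ℤ)-1) = FibZ (2*n+1) := congrArg FibZ (by omega)
  have e₂ : FibZ (2*((n + 1 : ℕ) : ℤ)) = FibZ (2*n+2) := congrArg FibZ (by omega)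
  have e₃ : FibZ (2*((n + 1 : ℕ) : ℤ)+1) = FibZ (2*n+1) + FibZ (2*n+2) :=
    FibZ_eq_add (by omega) (by omega) (by omega)
  have r₃ : FibZ (2*n+1) = FibZ (2*n-1) + FibZ (2*n) :=
    FibZ_eq_add (by omega) (by omega) (by omega)
  have r₄ : FibZ (2*n+2) = FibZ (2*n) + FibZ (2*n+1) :=
    FibZ_eq_add (by omega) (by omega) (by omega)
  simp only [OddCone, EvenCone, e₀, e₁, e₂, e₃, r₄, r₃]
  constructor <;> rintro ⟨h₁, h₂, h₃⟩ <;> refine ⟨?_, ?_, ?_⟩ <;> linarith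

lemma OddCone.pos : ∀ {n : ℕ} {a b : ℤ}, OddCone n a b → 0 < a ∧ 0 < b
  | 0, a, b, h => by
    norm_num [OddCone, FibZ] at h
    omega
  | n + 1, a, b, h => by
    have := OddCone.pos ((evenCone_iff n).1 ((oddCone_succ_iff n).1 h))
    omega

lemma EvenCone.pos {n : ℕ} (h : EvenCone n a b) : 0 < a := by
  have := ((evenCone_iff n).1 h).pos
  omega

end Fibonacci

section Dynamics

variable [Fact p.Prime] {c : ℚ_[p]} {z : ℚ_[p] × ℚ_[p]}

lemma one_lt_prime_cast : (1 : ℝ) < p := Nat.one_lt_cast.2 (Fact.out : p.Prime).one_lt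

lemma g_mem_QSet (hz : z ∈ QSet c) : g c z ∈ QSet c := fun n => by
  simpa only [iterate_succ_apply] using hz (n + 1)

lemma snd_ne_zero_of_mem_QSet (hz : z ∈ QSet c) : z.2 ≠ 0 := hz 0

lemma norm_g_snd (hc : ‖c‖ = 1) (hx : 1 < ‖z.1‖) : ‖(g c z).2‖ = ‖z.1‖ / ‖z.2‖ := by
  rw [g, norm_div, norm_sub_eq_left_of_norm_lt (hc ▸ hx)]

lemma norm_g_fst_mul_norm_g_snd_le (hc : ‖c‖ = 1) (hx : ‖z.1‖ ≤ 1) (hy : z.2 ≠ 0) :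
    ‖(g c z).1‖ * ‖(g c z).2‖ ≤ 1 := by
  rw [g, norm_div, mul_div_cancel₀ _ (norm_ne_zero_iff.2 hy)]
  exact norm_sub_le_of_norm_le hx hc.le

def normExpSet (c : ℚ_[p]) (P : ℤ → ℤ → Prop) : Set (ℚ_[p] × ℚ_[p]) :=
  {z ∈ QSet c | ∃ a b : ℤ, ‖z.1‖ = (p : ℝ) ^ a ∧ ‖z.2‖ = (p : ℝ) ^ b ∧ P a b}

lemma mapsTo_g_normExpSet (hc : ‖c‖ = 1) {P R : ℤ → ℤ → Prop}
    (h : ∀ a b, P a b → 0 < a ∧ R b (a - b)) :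
    MapsTo (g c) (normExpSet c P) (normExpSet c R) := by
  rintro z ⟨hz, a, b, ha, hb, hP⟩
  obtain ⟨ha₀, hR⟩ := h a b hP
  have hx : 1 < ‖z.1‖ := ha ▸ one_lt_zpow₀ one_lt_prime_cast ha₀
  refine ⟨g_mem_QSet hz, b, a - b, hb, ?_, hR⟩
  rw [norm_g_snd hc hx, ha, hb, zpow_sub₀ (zero_lt_one.trans one_lt_prime_cast).ne']

lemma exists_norm_eq_zpow {x : ℚ_[p]} (hx : x ≠ 0) : ∃ a : ℤ, ‖x‖ = (p : ℝ) ^ a :=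
  ⟨_, Padic.norm_eq_zpow_neg_valuation hx⟩

lemma zpow_zpow_prime_lt_iff {a b m n : ℤ} :
    ((p : ℝ) ^ a) ^ m < ((p : ℝ) ^ b) ^ n ↔ a * m < b * n := by
  rw [← zpow_mul, ← zpow_mul, zpow_lt_zpow_iff_right₀ one_lt_prime_cast]

lemma zpow_zpow_prime_le_iff {a b m n : ℤ} :
    ((p : ℝ) ^ a) ^ m ≤ ((p : ℝ) ^ b) ^ n ↔ a * m ≤ b * n := by
  rw [← zpow_mul, ← zpow_mul, zpow_le_zpow_iff_right₀ one_lt_prime_cast]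

lemma Modd_eq (n : ℕ) : Modd c n = normExpSet c (OddCone n) := by
  ext z
  refine and_congr_right fun hz => ⟨fun h => ?_, fun ⟨a, b, ha, hb, h⟩ => ?_⟩
  · obtain ⟨a, ha⟩ :=
      exists_norm_eq_zpow (ne_zero_of_norm_zpow_lt (FibZ_ne_zero (by omega) (by omega)) h.1)
    obtain ⟨b, hb⟩ := exists_norm_eq_zpow (snd_ne_zero_of_mem_QSet hz)
    refine ⟨a, b, ha, hb, ?_⟩
    simpa only [OddCone, ha, hb, zpow_zpow_prime_lt_iff, zpow_zpow_prime_le_iff] using h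
  · simpa only [OddCone, ha, hb, zpow_zpow_prime_lt_iff, zpow_zpow_prime_le_iff] using h

lemma Meven_eq (n : ℕ) : Meven c n = normExpSet c (EvenCone n) := by
  ext z
  refine and_congr_right fun hz => ⟨fun h => ?_, fun ⟨a, b, ha, hb, h⟩ => ?_⟩
  · obtain ⟨a, ha⟩ :=
      exists_norm_eq_zpow (ne_zero_of_norm_zpow_lt (FibZ_ne_zero (by omega) (by omega)) h.2.1)
    obtain ⟨b, hb⟩ := exists_norm_eq_zpow (snd_ne_zero_of_mem_QSet hz)
    refine ⟨a, b, ha, hb, ?_⟩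
    simpa only [EvenCone, ha, hb, zpow_zpow_prime_lt_iff, zpow_zpow_prime_le_iff] using h
  · simpa only [EvenCone, ha, hb, zpow_zpow_prime_lt_iff, zpow_zpow_prime_le_iff] using h

def HSet (c : ℚ_[p]) : Set (ℚ_[p] × ℚ_[p]) := {z ∈ QSet c | 1 < ‖z.1‖ ∧ ‖z.2‖ ≤ 1}

lemma normExpSet_subset_HSet : normExpSet c (fun a b => 0 < a ∧ b ≤ 0) ⊆ HSet c := by
  have hp := one_lt_prime_cast (p := p)
  rintro z ⟨hz, a, b, ha, hb, ha₀, hb₀⟩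
  exact ⟨hz, ha ▸ one_lt_zpow₀ hp ha₀, hb ▸ zpow_le_one_of_nonpos₀ hp.le hb₀⟩

lemma mapsTo_g_Modd_zero (hc : ‖c‖ = 1) : MapsTo (g c) (Modd c 0) (HSet c) := by
  rw [Modd_eq]
  refine (mapsTo_g_normExpSet hc fun a b h => ?_).mono_right normExpSet_subset_HSet
  norm_num [OddCone, FibZ] at h
  omega

lemma mapsTo_g_Meven (hc : ‖c‖ = 1) (n : ℕ) : MapsTo (g c) (Meven c n) (Modd c n) := by
  rw [Meven_eq, Modd_eq]
  exact mapsTo_g_normExpSet hc fun a b h => ⟨h.pos, (evenCone_iff n).1 h⟩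

lemma mapsTo_g_Modd_succ (hc : ‖c‖ = 1) (n : ℕ) : MapsTo (g c) (Modd c (n + 1)) (Meven c n) := by
  rw [Modd_eq, Meven_eq]
  exact mapsTo_g_normExpSet hc fun a b h => ⟨h.pos.1, (oddCone_succ_iff n).1 h⟩

lemma mapsTo_iterate_Modd (hc : ‖c‖ = 1) :
    ∀ n : ℕ, MapsTo (g c)^[2 * n + 1] (Modd c n) (HSet c)
  | 0 => mapsTo_g_Modd_zero hc
  | n + 1 => by
    rw [show 2 * (n + 1) + 1 = 2 * n + 1 + 1 + 1 by ring, iterate_succ, iterate_succ]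
    exact ((mapsTo_iterate_Modd hc n).comp (mapsTo_g_Meven hc n)).comp (mapsTo_g_Modd_succ hc n)

lemma mapsTo_iterate_Meven (hc : ‖c‖ = 1) (n : ℕ) :
    MapsTo (g c)^[2 * n + 2] (Meven c n) (HSet c) := by
  rw [iterate_succ]
  exact (mapsTo_iterate_Modd hc n).comp (mapsTo_g_Meven hc n)

def escapeSet (c : ℚ_[p]) : Set (ℚ_[p] × ℚ_[p]) :=
  {z ∈ QSet c | 1 < ‖z.1‖ ∧ ‖z.1‖ * ‖z.2‖ ≤ 1}

lemma escapeSet_subset_HSet : escapeSet c ⊆ HSet c := by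
  rintro z ⟨hz, hx, hxy⟩
  refine ⟨hz, hx, le_of_mul_le_mul_left ?_ (zero_lt_one.trans hx)⟩
  nlinarith [norm_nonneg z.2]

lemma mapsTo_iterate_two_HSet (hc : ‖c‖ = 1) : MapsTo (g c)^[2] (HSet c) (escapeSet c) := by
  rintro z ⟨hz, hx, hy⟩
  refine ⟨g_mem_QSet (g_mem_QSet hz), ?_,
    norm_g_fst_mul_norm_g_snd_le hc hy (snd_ne_zero_of_mem_QSet (g_mem_QSet hz))⟩
  show 1 < ‖(g c z).2‖
  rw [norm_g_snd hc hx, lt_div_iff₀ (norm_pos_iff.2 (snd_ne_zero_of_mem_QSet hz)), one_mul]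
  exact hy.trans_lt hx

lemma sq_norm_le_norm_iterate_two (hc : ‖c‖ = 1) (hz : z ∈ escapeSet c) :
    ‖z.1‖ ^ 2 ≤ ‖((g c)^[2] z).1‖ := by
  obtain ⟨hz, hx, hxy⟩ := hz
  show ‖z.1‖ ^ 2 ≤ ‖(g c z).2‖
  rw [norm_g_snd hc hx, le_div_iff₀ (norm_pos_iff.2 (snd_ne_zero_of_mem_QSet hz))]
  nlinarith

lemma pow_two_pow_le_norm_iterate (hc : ‖c‖ = 1) (hz : z ∈ escapeSet c) (k : ℕ) :
    ‖z.1‖ ^ 2 ^ k ≤ ‖(((g c)^[2])^[k] z).1‖ := by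
  have hmaps := (mapsTo_iterate_two_HSet hc).mono_left escapeSet_subset_HSet
  induction k with
  | zero => simp
  | succ k ih =>
    rw [iterate_succ_apply', pow_succ, pow_mul]
    exact (pow_le_pow_left₀ (by positivity) ih 2).trans
      (sq_norm_le_norm_iterate_two hc (hmaps.iterate k hz))

lemma exists_lt_pnorm_iterate (hc : ‖c‖ = 1) (hz : z ∈ escapeSet c) (M : ℝ) :
    ∃ n, M < pnorm ((g c)^[n] z) := by
  obtain ⟨k, hk⟩ := pow_unbounded_of_one_lt M hz.2.1
  refine ⟨2 * k, hk.trans_le ?_⟩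
  calc ‖z.1‖ ^ k ≤ ‖z.1‖ ^ 2 ^ k := pow_le_pow_right₀ hz.2.1.le Nat.lt_two_pow_self.le
    _ ≤ ‖(((g c)^[2])^[k] z).1‖ := pow_two_pow_le_norm_iterate hc hz k
    _ ≤ pnorm ((g c)^[2 * k] z) := by rw [iterate_mul]; exact le_max_left _ _

lemma notMem_KMinus_of_iterate_mem_HSet (hc : ‖c‖ = 1) {m : ℕ}
    (hz : (g c)^[m] z ∈ HSet c) : z ∉ KMinus c := by
  rintro ⟨-, M, hM⟩
  obtain ⟨n, hn⟩ := exists_lt_pnorm_iterate hc (mapsTo_iterate_two_HSet hc hz) M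
  rw [← iterate_add_apply, ← iterate_add_apply] at hn
  exact hn.not_ge (hM _)

end Dynamics

theorem stmt15_general [Fact p.Prime] (c : ℚ_[p]) (hc : ‖c‖ = 1)
    (H : Set (ℚ_[p] × ℚ_[p]))
    (hH : H = {z ∈ QSet c | 1 < ‖z.1‖ ∧ ‖z.2‖ ≤ 1}) :
    g c '' Modd c 0 ⊆ H ∧
      (∀ n : ℕ, 1 ≤ n → g c '' Meven c n ⊆ Modd c n) ∧
      (∀ n : ℕ, 1 ≤ n → g c '' Modd c n ⊆ Meven c (n - 1)) ∧
      ((⋃ n : ℕ, Modd c n) ∪ (⋃ n : ℕ, Meven c n)) ⊆ QSet c \ KMinus c := by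
  subst hH
  refine ⟨(mapsTo_g_Modd_zero hc).image_subset, fun n _ => (mapsTo_g_Meven hc n).image_subset,
    fun n hn => ?_, ?_⟩
  · obtain ⟨m, rfl⟩ := Nat.exists_eq_add_of_le' hn
    exact (mapsTo_g_Modd_succ hc m).image_subset
  · rintro z (hz | hz) <;> obtain ⟨n, hz⟩ := mem_iUnion.1 hz
    · exact ⟨hz.1, notMem_KMinus_of_iterate_mem_HSet hc (mapsTo_iterate_Modd hc n hz)⟩
    · exact ⟨hz.1, notMem_KMinus_of_iterate_mem_HSet hc (mapsTo_iterate_Meven hc n hz)⟩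

/-- If `|c| = 1` then `g(M₁) ⊆ H`, and for `n ≥ 1`, `g(M_{2n+2}) ⊆ M_{2n+1}` and
`g(M_{2n+1}) ⊆ M_{2n}`; consequently `M = ⋃_{i ≥ 1} M_i ⊆ Q \ K⁻`. -/
theorem stmt15 [Fact p.Prime] (hodd : Odd p) (c : ℚ_[p]) (hc : ‖c‖ = 1)
    (H : Set (ℚ_[p] × ℚ_[p]))
    (hH : H = {z ∈ QSet c | 1 < ‖z.1‖ ∧ ‖z.2‖ ≤ 1}) :
    g c '' Modd c 0 ⊆ H ∧
      (∀ n : ℕ, 1 ≤ n → g c '' Meven c n ⊆ Modd c n) ∧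
      (∀ n : ℕ, 1 ≤ n → g c '' Modd c n ⊆ Meven c (n - 1)) ∧
      ((⋃ n : ℕ, Modd c n) ∪ (⋃ n : ℕ, Meven c n)) ⊆ QSet c \ KMinus c :=
  stmt15_general c hc H hH
end
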